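/- Let f₁, f₂ : ℝ^d → ℝ be differentiable with curvatures in [μ₁, L₁] and [μ₂, L₂] respectively, where 0 < L₂ ≤ μ₁ < L₁, μ₁ + μ₂ > 0 and μ₂ ∈ [−L₂μ₁/(L₂+μ₁), L₂). Let x⁰, …, x^{N+1} be generated by DCA (∇f₁(x^{k+1}) = ∇f₂(x^k)), N ≥ 1. Then (1/2)‖x^N − x^{N+1}‖² ≤ (F(x⁰) − F(x^{N+1})) / (μ₁ + μ₂ + μ₁·E_N(L₂/μ₁)), where E_N(z) = Σ_{j=1}^{2N} z^{−j} and F = f₁ − f₂. -/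

import Mathlib

open Set

noncomputable def E (N : ℕ) (z : ℝ) : ℝ := ∑ j ∈ Finset.Icc 1 (2 * N), z ^ (-(j : ℤ))

/-!
Write `sₖ = xₖ - xₖ₊₁` and `gₖ = ∇f₂ xₖ - ∇f₂ xₖ₊₁`. Strong convexity of `f₁` and the
interpolation inequality for `f₂` show that step `k` decreases `F` by at least
`(μ₁ + μ₂)/2 ‖sₖ‖² + ‖gₖ - μ₂ sₖ‖² / (2 (L₂ - μ₂))`. Cocoercivity of `∇f₂ - μ₂ • id` together with
`μ₂ ≥ -L₂ μ₁ / (L₂ + μ₁)` bounds this below by `(μ₁ + L₂)/(2 L₂²) ‖gₖ‖²`, and `∇f₁ (xₖ₊₂) = ∇f₂ (xₖ₊₁)`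
with strong monotonicity of `∇f₁` gives `μ₁ ‖sₖ₊₁‖ ≤ ‖gₖ‖ ≤ L₂ ‖sₖ‖`. Hence every step before
the last decreases `F` by a multiple of `‖s_N‖²` that grows geometrically in `μ₁ / L₂` going
backwards, and these multiples add up to `μ₁ E_N (L₂ / μ₁)`.
-/

open scoped InnerProductSpace

theorem ConvexOn.add_fderiv_sub_le {F : Type*} [NormedAddCommGroup F] [NormedSpace ℝ F]
    {f : F → ℝ} {f' : F →L[ℝ] ℝ} {x : F} (hf : ConvexOn ℝ univ f) (hx : HasFDerivAt f f' x)
    (y : F) : f x + f' (y - x) ≤ f y := by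
  let ℓ : ℝ →ᵃ[ℝ] F := AffineMap.lineMap x y
  have hderiv : HasDerivAt (f ∘ ℓ) (f' (y - x)) 0 :=
    (by simpa [ℓ] using hx : HasFDerivAt f f' (ℓ 0)).comp_hasDerivAt 0 AffineMap.hasDerivAt_lineMap
  have hslope := (hf.comp_affineMap ℓ).le_slope_of_hasDerivAt (mem_univ 0) (mem_univ 1)
    zero_lt_one hderiv
  simp only [slope_def_field, Function.comp_apply, AffineMap.lineMap_apply_one,
    AffineMap.lineMap_apply_zero, sub_zero, div_one, ℓ] at hslope
  linarith

section Gradient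

variable {F : Type*} [NormedAddCommGroup F] [InnerProductSpace ℝ F] [CompleteSpace F]
  {f : F → ℝ} {x y G Gx Gy : F} {c C : ℝ}

theorem ConvexOn.add_inner_sub_le (hf : ConvexOn ℝ univ f) (hx : HasGradientAt f G x) (y : F) :
    f x + ⟪G, y - x⟫_ℝ ≤ f y := by
  simpa only [InnerProductSpace.toDual_apply_apply] using hf.add_fderiv_sub_le hx.hasFDerivAt y

theorem HasGradientAt.sub_half_mul_norm_sq (hx : HasGradientAt f G x) (c : ℝ) :
    HasGradientAt (fun u => f u - c / 2 * ‖u‖ ^ 2) (G - c • x) x := by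
  rw [hasGradientAt_iff_hasFDerivAt] at hx ⊢
  refine (hx.sub ((hasStrictFDerivAt_norm_sq x).hasFDerivAt.const_mul (c / 2))).congr_fderiv ?_
  ext v
  simp only [sub_apply, InnerProductSpace.toDual_apply_apply, smul_apply, coe_innerSL_apply,
    map_sub, map_smul, smul_eq_mul, nsmul_eq_mul, Nat.cast_ofNat]
  ring

theorem add_inner_add_half_mul_norm_sq_le (hc : ConvexOn ℝ univ (fun u => f u - c / 2 * ‖u‖ ^ 2))
    (hx : HasGradientAt f G x) (y : F) :
    f x + ⟪G, y - x⟫_ℝ + c / 2 * ‖y - x‖ ^ 2 ≤ f y := by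
  have h := hc.add_inner_sub_le (hx.sub_half_mul_norm_sq c) y
  have hy : ‖y‖ ^ 2 = ‖x‖ ^ 2 + 2 * ⟪x, y - x⟫_ℝ + ‖y - x‖ ^ 2 := by
    rw [← norm_add_sq_real, add_sub_cancel]
  rw [inner_sub_left, real_inner_smul_left] at h
  linear_combination h - c / 2 * hy

theorem le_add_inner_add_half_mul_norm_sq (hC : ConvexOn ℝ univ (fun u => C / 2 * ‖u‖ ^ 2 - f u))
    (hx : HasGradientAt f G x) (y : F) :
    f y ≤ f x + ⟪G, y - x⟫_ℝ + C / 2 * ‖y - x‖ ^ 2 := by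
  have hneg : HasGradientAt (fun u => -f u) (-G) x := by
    rw [hasGradientAt_iff_hasFDerivAt] at hx ⊢
    rw [map_neg]
    exact hx.neg
  have hC' : ConvexOn ℝ univ (fun u => -f u - -C / 2 * ‖u‖ ^ 2) := by
    convert hC using 2 with u
    ring
  have h := add_inner_add_half_mul_norm_sq_le hC' hneg y
  rw [inner_neg_left] at h
  linarith

theorem mul_norm_sq_le_inner_sub (hc : ConvexOn ℝ univ (fun u => f u - c / 2 * ‖u‖ ^ 2))
    (hx : HasGradientAt f Gx x) (hy : HasGradientAt f Gy y) :
    c * ‖x - y‖ ^ 2 ≤ ⟪Gx - Gy, x - y⟫_ℝ := by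
  have hxy := add_inner_add_half_mul_norm_sq_le hc hx y
  have hyx := add_inner_add_half_mul_norm_sq_le hc hy x
  rw [← neg_sub x y, inner_neg_right, norm_neg] at hxy
  rw [inner_sub_left]
  linarith

theorem mul_norm_sub_le_norm_sub (hc : ConvexOn ℝ univ (fun u => f u - c / 2 * ‖u‖ ^ 2))
    (hx : HasGradientAt f Gx x) (hy : HasGradientAt f Gy y) :
    c * ‖x - y‖ ≤ ‖Gx - Gy‖ := by
  rcases (norm_nonneg (x - y)).eq_or_lt with h0 | hpos
  · rw [← h0, mul_zero]
    exact norm_nonneg _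
  · refine le_of_mul_le_mul_right ?_ hpos
    calc c * ‖x - y‖ * ‖x - y‖ = c * ‖x - y‖ ^ 2 := by ring
      _ ≤ ⟪Gx - Gy, x - y⟫_ℝ := mul_norm_sq_le_inner_sub hc hx hy
      _ ≤ ‖Gx - Gy‖ * ‖x - y‖ := real_inner_le_norm _ _

theorem ConvexOn.add_inner_add_norm_sq_div_le {ℓ : ℝ} (hℓ : 0 < ℓ) (hf : ConvexOn ℝ univ f)
    (hsmooth : ConvexOn ℝ univ (fun u => ℓ / 2 * ‖u‖ ^ 2 - f u))
    (hx : HasGradientAt f Gx x) (hy : HasGradientAt f Gy y) :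
    f x + ⟪Gx, y - x⟫_ℝ + ‖Gy - Gx‖ ^ 2 / (2 * ℓ) ≤ f y := by
  -- compare both first-order bounds at the point reached by a gradient step from `y`
  set w := y - ℓ⁻¹ • (Gy - Gx)
  have hlow := hf.add_inner_sub_le hx w
  have hup := le_add_inner_add_half_mul_norm_sq hsmooth hy w
  have hwx : w - x = (y - x) - ℓ⁻¹ • (Gy - Gx) := by simp only [w]; abel
  have hwy : w - y = -(ℓ⁻¹ • (Gy - Gx)) := by simp only [w]; abel
  rw [hwx, inner_sub_right, real_inner_smul_right] at hlow
  rw [hwy, inner_neg_right, real_inner_smul_right, norm_neg, norm_smul, mul_pow,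
    Real.norm_eq_abs, sq_abs] at hup
  have hinner : ℓ⁻¹ * ⟪Gy, Gy - Gx⟫_ℝ - ℓ⁻¹ * ⟪Gx, Gy - Gx⟫_ℝ = ℓ⁻¹ * ‖Gy - Gx‖ ^ 2 := by
    rw [← mul_sub, ← inner_sub_left, real_inner_self_eq_norm_sq]
  have hquad : ℓ / 2 * (ℓ⁻¹ ^ 2 * ‖Gy - Gx‖ ^ 2) = ‖Gy - Gx‖ ^ 2 / (2 * ℓ) := by
    field_simp
  have hlin : ℓ⁻¹ * ‖Gy - Gx‖ ^ 2 = 2 * (‖Gy - Gx‖ ^ 2 / (2 * ℓ)) := by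
    field_simp
  linarith

theorem add_inner_add_half_mul_norm_sq_add_le (hcC : c < C)
    (hc : ConvexOn ℝ univ (fun u => f u - c / 2 * ‖u‖ ^ 2))
    (hC : ConvexOn ℝ univ (fun u => C / 2 * ‖u‖ ^ 2 - f u))
    (hx : HasGradientAt f Gx x) (hy : HasGradientAt f Gy y) :
    f x + ⟪Gx, y - x⟫_ℝ + c / 2 * ‖y - x‖ ^ 2
      + ‖Gy - Gx - c • (y - x)‖ ^ 2 / (2 * (C - c)) ≤ f y := by
  have hsmooth : ConvexOn ℝ univ
      (fun u => (C - c) / 2 * ‖u‖ ^ 2 - (fun v => f v - c / 2 * ‖v‖ ^ 2) u) := by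
    convert hC using 2 with u
    ring
  have h := hc.add_inner_add_norm_sq_div_le (sub_pos.mpr hcC) hsmooth
    (hx.sub_half_mul_norm_sq c) (hy.sub_half_mul_norm_sq c)
  have hgrad : Gy - c • y - (Gx - c • x) = Gy - Gx - c • (y - x) := by module
  have hnorm : ‖y‖ ^ 2 = ‖x‖ ^ 2 + 2 * ⟪x, y - x⟫_ℝ + ‖y - x‖ ^ 2 := by
    rw [← norm_add_sq_real, add_sub_cancel]
  rw [hgrad, inner_sub_left, real_inner_smul_left] at h
  linear_combination h - c / 2 * hnorm

theorem norm_sq_le_mul_inner_of_convexOn (hcC : c < C)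
    (hc : ConvexOn ℝ univ (fun u => f u - c / 2 * ‖u‖ ^ 2))
    (hC : ConvexOn ℝ univ (fun u => C / 2 * ‖u‖ ^ 2 - f u))
    (hx : HasGradientAt f Gx x) (hy : HasGradientAt f Gy y) :
    ‖Gy - Gx - c • (y - x)‖ ^ 2 ≤ (C - c) * ⟪Gy - Gx - c • (y - x), y - x⟫_ℝ := by
  have hxy := add_inner_add_half_mul_norm_sq_add_le hcC hc hC hx hy
  have hyx := add_inner_add_half_mul_norm_sq_add_le hcC hc hC hy hx
  have hv : Gx - Gy - c • (x - y) = -(Gy - Gx - c • (y - x)) := by module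
  rw [hv, norm_neg, ← neg_sub y x, inner_neg_right, norm_neg] at hyx
  have hinner : ⟪Gy - Gx - c • (y - x), y - x⟫_ℝ
      = ⟪Gy, y - x⟫_ℝ - ⟪Gx, y - x⟫_ℝ - c * ‖y - x‖ ^ 2 := by
    rw [inner_sub_left, inner_sub_left, real_inner_smul_left, real_inner_self_eq_norm_sq]
  have hpos : 0 < C - c := sub_pos.mpr hcC
  rw [hinner, ← div_le_iff₀' hpos]
  have hhalf : ‖Gy - Gx - c • (y - x)‖ ^ 2 / (C - c)
      = 2 * (‖Gy - Gx - c • (y - x)‖ ^ 2 / (2 * (C - c))) := by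
    field_simp
  linarith

theorem norm_sub_le_mul_norm_sub_of_convexOn (hcC : c < C) (hCc : -C ≤ c)
    (hc : ConvexOn ℝ univ (fun u => f u - c / 2 * ‖u‖ ^ 2))
    (hC : ConvexOn ℝ univ (fun u => C / 2 * ‖u‖ ^ 2 - f u))
    (hx : HasGradientAt f Gx x) (hy : HasGradientAt f Gy y) :
    ‖Gy - Gx‖ ≤ C * ‖y - x‖ := by
  -- the cocoercivity inequality says `Gy - Gx` lies in the ball of radius `r ‖y - x‖`
  -- around `(C + c) / 2 • (y - x)`
  have hco := norm_sq_le_mul_inner_of_convexOn hcC hc hC hx hy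
  set v := Gy - Gx - c • (y - x)
  set r := (C - c) / 2
  have hball_sq : ‖v - r • (y - x)‖ ^ 2 ≤ (r * ‖y - x‖) ^ 2 := by
    rw [norm_sub_sq_real, real_inner_smul_right, norm_smul, Real.norm_eq_abs,
      abs_of_nonneg (by positivity : 0 ≤ r)]
    have h2r : 2 * (r * ⟪v, y - x⟫_ℝ) = (C - c) * ⟪v, y - x⟫_ℝ := by ring
    linarith
  have hball : ‖v - r • (y - x)‖ ≤ r * ‖y - x‖ :=
    (pow_le_pow_iff_left₀ (norm_nonneg _) (by positivity) two_ne_zero).mp hball_sq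
  calc ‖Gy - Gx‖ = ‖(v - r • (y - x)) + ((C + c) / 2) • (y - x)‖ := by
        congr 1; simp only [v, r]; module
    _ ≤ r * ‖y - x‖ + (C + c) / 2 * ‖y - x‖ := by
        refine (norm_add_le _ _).trans (add_le_add hball ?_)
        rw [norm_smul, Real.norm_eq_abs, abs_of_nonneg (by linarith)]
    _ = C * ‖y - x‖ := by ring

end Gradient

theorem div_sq_mul_norm_sq_le_of_cocoercive {F : Type*} [NormedAddCommGroup F] [InnerProductSpace ℝ F]
    {s g : F} {μ₁ μ₂ L₂ : ℝ} (hL₂ : 0 < L₂) (hμ₁ : 0 ≤ μ₁) (hμ₂ : μ₂ < L₂)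
    (hlo : L₂ ^ 2 ≤ (μ₁ + L₂) * (L₂ + μ₂))
    (hco : ‖g - μ₂ • s‖ ^ 2 ≤ (L₂ - μ₂) * ⟪g - μ₂ • s, s⟫_ℝ) :
    (μ₁ + L₂) / L₂ ^ 2 * ‖g‖ ^ 2 ≤ (μ₁ + μ₂) * ‖s‖ ^ 2 + ‖g - μ₂ • s‖ ^ 2 / (L₂ - μ₂) := by
  have ha : 0 < L₂ - μ₂ := sub_pos.mpr hμ₂
  have hv : ‖g - μ₂ • s‖ ^ 2 = ‖g‖ ^ 2 - 2 * μ₂ * ⟪g, s⟫_ℝ + μ₂ ^ 2 * ‖s‖ ^ 2 := by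
    rw [norm_sub_sq_real, real_inner_smul_right, norm_smul, mul_pow, Real.norm_eq_abs, sq_abs]
    ring
  have hvs : ⟪g - μ₂ • s, s⟫_ℝ = ⟪g, s⟫_ℝ - μ₂ * ‖s‖ ^ 2 := by
    rw [inner_sub_left, real_inner_smul_left, real_inner_self_eq_norm_sq]
  have hw : 0 ≤ ‖g‖ ^ 2 - 2 * L₂ * ⟪g, s⟫_ℝ + L₂ ^ 2 * ‖s‖ ^ 2 := by
    have := sq_nonneg ‖g - L₂ • s‖
    rwa [norm_sub_sq_real, real_inner_smul_right, norm_smul, mul_pow, Real.norm_eq_abs, sq_abs,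
      ← mul_assoc] at this
  rw [hv, hvs] at hco
  rw [hv, ← sub_nonneg]
  -- the second coefficient is nonnegative exactly by `hlo`; equality holds at `g = L₂ • s`
  have key : (μ₁ + μ₂) * ‖s‖ ^ 2 + (‖g‖ ^ 2 - 2 * μ₂ * ⟪g, s⟫_ℝ + μ₂ ^ 2 * ‖s‖ ^ 2) / (L₂ - μ₂)
        - (μ₁ + L₂) / L₂ ^ 2 * ‖g‖ ^ 2
      = 2 * μ₁ / (L₂ * (L₂ - μ₂)) * ((L₂ - μ₂) * (⟪g, s⟫_ℝ - μ₂ * ‖s‖ ^ 2)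
          - (‖g‖ ^ 2 - 2 * μ₂ * ⟪g, s⟫_ℝ + μ₂ ^ 2 * ‖s‖ ^ 2))
        + ((μ₁ + L₂) * (L₂ + μ₂) - L₂ ^ 2) / (L₂ ^ 2 * (L₂ - μ₂))
          * (‖g‖ ^ 2 - 2 * L₂ * ⟪g, s⟫_ℝ + L₂ ^ 2 * ‖s‖ ^ 2) := by
    field_simp
    ring
  rw [key]
  have hco_slack := sub_nonneg.mpr hco
  have hlo_slack := sub_nonneg.mpr hlo
  positivity

theorem mul_geom_sum_mul_sq_le_sub {D r : ℕ → ℝ} {b w : ℝ} (hb : 0 ≤ b) (hw : 0 ≤ w)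
    (hr : ∀ k, 0 ≤ r k) (N : ℕ) (hdec : ∀ k < N, b * r (k + 1) ^ 2 ≤ D k - D (k + 1))
    (hgrow : ∀ k < N, w * r (k + 1) ≤ r k) :
    b * (∑ j ∈ Finset.range N, (w ^ 2) ^ j) * r N ^ 2 ≤ D 0 - D N := by
  induction N with
  | zero => simp
  | succ n ih =>
    have hprev := ih (fun k hk => hdec k (by omega)) (fun k hk => hgrow k (by omega))
    have hsq : (w * r (n + 1)) ^ 2 ≤ r n ^ 2 :=
      pow_le_pow_left₀ (mul_nonneg hw (hr _)) (hgrow n n.lt_succ_self) 2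
    have hsum : 0 ≤ b * ∑ j ∈ Finset.range n, (w ^ 2) ^ j := by positivity
    calc b * (∑ j ∈ Finset.range (n + 1), (w ^ 2) ^ j) * r (n + 1) ^ 2
        = b * (∑ j ∈ Finset.range n, (w ^ 2) ^ j) * (w * r (n + 1)) ^ 2
          + b * r (n + 1) ^ 2 := by
          rw [Finset.sum_range_succ', Finset.sum_congr rfl fun j _ => pow_succ (w ^ 2) j,
            ← Finset.sum_mul]
          ring
      _ ≤ b * (∑ j ∈ Finset.range n, (w ^ 2) ^ j) * r n ^ 2 + (D n - D (n + 1)) :=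
          add_le_add (mul_le_mul_of_nonneg_left hsq hsum) (hdec n n.lt_succ_self)
      _ ≤ D 0 - D (n + 1) := by linarith

theorem E_eq_mul_geom_sum (N : ℕ) (z : ℝ) :
    E N z = (z⁻¹ + z⁻¹ ^ 2) * ∑ j ∈ Finset.range N, (z⁻¹ ^ 2) ^ j := by
  induction N with
  | zero => simp [E]
  | succ n ih =>
    rw [E, show 2 * (n + 1) = 2 * n + 1 + 1 by ring, Finset.sum_Icc_succ_top (by omega),
      Finset.sum_Icc_succ_top (by omega), ← E, ih, Finset.sum_range_succ]
    simp only [zpow_neg, zpow_natCast, inv_pow]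
    ring

section DCA

variable {F : Type*} [NormedAddCommGroup F] [InnerProductSpace ℝ F] [CompleteSpace F]
  {f₁ f₂ : F → ℝ} {μ₁ μ₂ L₂ : ℝ} {p q r : F}

theorem dca_descent (hf₁ : Differentiable ℝ f₁) (hf₂ : Differentiable ℝ f₂) (hμ₂ : μ₂ < L₂)
    (hcμ₁ : ConvexOn ℝ univ (fun x => f₁ x - μ₁ / 2 * ‖x‖ ^ 2))
    (hcL₂ : ConvexOn ℝ univ (fun x => L₂ / 2 * ‖x‖ ^ 2 - f₂ x))
    (hcμ₂ : ConvexOn ℝ univ (fun x => f₂ x - μ₂ / 2 * ‖x‖ ^ 2))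
    (hq : gradient f₁ q = gradient f₂ p) :
    (μ₁ + μ₂) / 2 * ‖p - q‖ ^ 2
        + ‖gradient f₂ p - gradient f₂ q - μ₂ • (p - q)‖ ^ 2 / (2 * (L₂ - μ₂))
      ≤ (f₁ p - f₂ p) - (f₁ q - f₂ q) := by
  have h₁ := add_inner_add_half_mul_norm_sq_le hcμ₁ (hq ▸ (hf₁ q).hasGradientAt) p
  have h₂ := add_inner_add_half_mul_norm_sq_add_le hμ₂ hcμ₂ hcL₂
    (hf₂ p).hasGradientAt (hf₂ q).hasGradientAt
  have hv : gradient f₂ q - gradient f₂ p - μ₂ • (q - p)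
      = -(gradient f₂ p - gradient f₂ q - μ₂ • (p - q)) := by module
  rw [hv, norm_neg, ← neg_sub p q, inner_neg_right, norm_neg] at h₂
  linarith

theorem dca_mul_norm_sub_le (hf₁ : Differentiable ℝ f₁)
    (hcμ₁ : ConvexOn ℝ univ (fun x => f₁ x - μ₁ / 2 * ‖x‖ ^ 2))
    (hq : gradient f₁ q = gradient f₂ p) (hr : gradient f₁ r = gradient f₂ q) :
    μ₁ * ‖q - r‖ ≤ ‖gradient f₂ p - gradient f₂ q‖ := by
  rw [← hq, ← hr]
  exact mul_norm_sub_le_norm_sub hcμ₁ (hf₁ q).hasGradientAt (hf₁ r).hasGradientAt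

theorem dca_sufficient_decrease (hf₁ : Differentiable ℝ f₁) (hf₂ : Differentiable ℝ f₂)
    (hL₂ : 0 < L₂) (hμ₁ : 0 ≤ μ₁) (hμ₂ : μ₂ < L₂) (hlo : L₂ ^ 2 ≤ (μ₁ + L₂) * (L₂ + μ₂))
    (hcμ₁ : ConvexOn ℝ univ (fun x => f₁ x - μ₁ / 2 * ‖x‖ ^ 2))
    (hcL₂ : ConvexOn ℝ univ (fun x => L₂ / 2 * ‖x‖ ^ 2 - f₂ x))
    (hcμ₂ : ConvexOn ℝ univ (fun x => f₂ x - μ₂ / 2 * ‖x‖ ^ 2))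
    (hq : gradient f₁ q = gradient f₂ p) (hr : gradient f₁ r = gradient f₂ q) :
    (μ₁ + L₂) / L₂ ^ 2 * (μ₁ * ‖q - r‖) ^ 2 / 2 ≤ (f₁ p - f₂ p) - (f₁ q - f₂ q) := by
  set g := gradient f₂ p - gradient f₂ q
  have hdescent := dca_descent hf₁ hf₂ hμ₂ hcμ₁ hcL₂ hcμ₂ hq
  have hco : ‖g - μ₂ • (p - q)‖ ^ 2 ≤ (L₂ - μ₂) * ⟪g - μ₂ • (p - q), p - q⟫_ℝ :=
    norm_sq_le_mul_inner_of_convexOn hμ₂ hcμ₂ hcL₂ (hf₂ q).hasGradientAt (hf₂ p).hasGradientAt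
  have hg := div_sq_mul_norm_sq_le_of_cocoercive hL₂ hμ₁ hμ₂ hlo hco
  have hstep : (μ₁ * ‖q - r‖) ^ 2 ≤ ‖g‖ ^ 2 :=
    pow_le_pow_left₀ (by positivity) (dca_mul_norm_sub_le hf₁ hcμ₁ hq hr) 2
  have hρ : 0 ≤ (μ₁ + L₂) / L₂ ^ 2 := by positivity
  have hhalf : ‖g - μ₂ • (p - q)‖ ^ 2 / (L₂ - μ₂)
      = 2 * (‖g - μ₂ • (p - q)‖ ^ 2 / (2 * (L₂ - μ₂))) := by
    field_simp
  linarith [mul_le_mul_of_nonneg_left hstep hρ]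

theorem dca_mul_norm_sub_le_mul_norm_sub (hf₁ : Differentiable ℝ f₁)
    (hf₂ : Differentiable ℝ f₂) (hμ₂ : μ₂ ∈ Ico (-L₂) L₂)
    (hcμ₁ : ConvexOn ℝ univ (fun x => f₁ x - μ₁ / 2 * ‖x‖ ^ 2))
    (hcL₂ : ConvexOn ℝ univ (fun x => L₂ / 2 * ‖x‖ ^ 2 - f₂ x))
    (hcμ₂ : ConvexOn ℝ univ (fun x => f₂ x - μ₂ / 2 * ‖x‖ ^ 2))
    (hq : gradient f₁ q = gradient f₂ p) (hr : gradient f₁ r = gradient f₂ q) :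
    μ₁ * ‖q - r‖ ≤ L₂ * ‖p - q‖ :=
  (dca_mul_norm_sub_le hf₁ hcμ₁ hq hr).trans <| norm_sub_le_mul_norm_sub_of_convexOn hμ₂.2 hμ₂.1
    hcμ₂ hcL₂ (hf₂ q).hasGradientAt (hf₂ p).hasGradientAt

end DCA

theorem stmt_15_general {d : ℕ} (f₁ f₂ : EuclideanSpace ℝ (Fin d) → ℝ) (μ₁ μ₂ L₂ : ℝ)
    (hf₁ : Differentiable ℝ f₁) (hf₂ : Differentiable ℝ f₂)
    (hL₂pos : 0 < L₂) (hL₂μ₁ : L₂ ≤ μ₁)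
    (hsum : μ₁ + μ₂ > 0) (hμ₂ : μ₂ ∈ Set.Ico (-L₂ * μ₁ / (L₂ + μ₁)) L₂)
    (hcμ₁ : ConvexOn ℝ univ (fun x => f₁ x - μ₁ / 2 * ‖x‖ ^ 2))
    (hcL₂ : ConvexOn ℝ univ (fun x => L₂ / 2 * ‖x‖ ^ 2 - f₂ x))
    (hcμ₂ : ConvexOn ℝ univ (fun x => f₂ x - μ₂ / 2 * ‖x‖ ^ 2))
    (N : ℕ) (x : ℕ → EuclideanSpace ℝ (Fin d))
    (hDCA : ∀ k ≤ N, gradient f₁ (x (k + 1)) = gradient f₂ (x k)) :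
    (1 / 2) * ‖x N - x (N + 1)‖ ^ 2 ≤
      ((f₁ (x 0) - f₂ (x 0)) - (f₁ (x (N + 1)) - f₂ (x (N + 1)))) /
        (μ₁ + μ₂ + μ₁ * E N (L₂ / μ₁)) := by
  obtain ⟨hμ₂lo, hμ₂L₂⟩ := hμ₂
  have hμ₁ : 0 < μ₁ := hL₂pos.trans_le hL₂μ₁
  have hlo : L₂ ^ 2 ≤ (μ₁ + L₂) * (L₂ + μ₂) := by
    rw [div_le_iff₀ (by positivity)] at hμ₂lo
    nlinarith
  have hμ₂ : μ₂ ∈ Ico (-L₂) L₂ := ⟨by nlinarith, hμ₂L₂⟩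
  set D : ℕ → ℝ := fun k => f₁ (x k) - f₂ (x k)
  have hhead : (μ₁ + L₂) / L₂ ^ 2 * μ₁ ^ 2 / 2 * (∑ j ∈ Finset.range N, ((μ₁ / L₂) ^ 2) ^ j)
      * ‖x N - x (N + 1)‖ ^ 2 ≤ D 0 - D N := by
    refine mul_geom_sum_mul_sq_le_sub (D := D) (r := fun k => ‖x k - x (k + 1)‖)
      (by positivity) (by positivity) (fun _ => norm_nonneg _) N (fun k hk => ?_) (fun k hk => ?_)
    · linear_combination dca_sufficient_decrease hf₁ hf₂ hL₂pos hμ₁.le hμ₂L₂ hlo hcμ₁ hcL₂ hcμ₂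
        (hDCA k hk.le) (hDCA (k + 1) hk)
    · rw [div_mul_eq_mul_div, div_le_iff₀' hL₂pos]
      exact dca_mul_norm_sub_le_mul_norm_sub hf₁ hf₂ hμ₂ hcμ₁ hcL₂ hcμ₂
        (hDCA k hk.le) (hDCA (k + 1) hk)
  have hlast := dca_descent hf₁ hf₂ hμ₂L₂ hcμ₁ hcL₂ hcμ₂ (hDCA N le_rfl)
  have hE : μ₁ * E N (L₂ / μ₁)
      = (μ₁ + L₂) / L₂ ^ 2 * μ₁ ^ 2 * ∑ j ∈ Finset.range N, ((μ₁ / L₂) ^ 2) ^ j := by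
    rw [E_eq_mul_geom_sum, inv_div]
    field_simp
    ring
  rw [hE, le_div_iff₀ (add_pos_of_pos_of_nonneg hsum (by positivity))]
  have hgap : 0 ≤ ‖gradient f₂ (x N) - gradient f₂ (x (N + 1)) - μ₂ • (x N - x (N + 1))‖ ^ 2
      / (2 * (L₂ - μ₂)) :=
    div_nonneg (sq_nonneg _) (by linarith)
  linarith

theorem stmt_15 {d : ℕ} (f₁ f₂ : EuclideanSpace ℝ (Fin d) → ℝ) (μ₁ L₁ μ₂ L₂ : ℝ)
    (hf₁ : Differentiable ℝ f₁) (hf₂ : Differentiable ℝ f₂)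
    (hL₂pos : 0 < L₂) (hL₂μ₁ : L₂ ≤ μ₁) (h₁ : μ₁ < L₁)
    (hsum : μ₁ + μ₂ > 0) (hμ₂ : μ₂ ∈ Set.Ico (-L₂ * μ₁ / (L₂ + μ₁)) L₂)
    (hcL₁ : ConvexOn ℝ univ (fun x => L₁ / 2 * ‖x‖ ^ 2 - f₁ x))
    (hcμ₁ : ConvexOn ℝ univ (fun x => f₁ x - μ₁ / 2 * ‖x‖ ^ 2))
    (hcL₂ : ConvexOn ℝ univ (fun x => L₂ / 2 * ‖x‖ ^ 2 - f₂ x))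
    (hcμ₂ : ConvexOn ℝ univ (fun x => f₂ x - μ₂ / 2 * ‖x‖ ^ 2))
    (N : ℕ) (hN : N ≥ 1) (x : ℕ → EuclideanSpace ℝ (Fin d))
    (hDCA : ∀ k ≤ N, gradient f₁ (x (k + 1)) = gradient f₂ (x k)) :
    (1 / 2) * ‖x N - x (N + 1)‖ ^ 2 ≤
      ((f₁ (x 0) - f₂ (x 0)) - (f₁ (x (N + 1)) - f₂ (x (N + 1)))) /
        (μ₁ + μ₂ + μ₁ * E N (L₂ / μ₁)) :=
  stmt_15_general f₁ f₂ μ₁ μ₂ L₂ hf₁ hf₂ hL₂pos hL₂μ₁ hsum hμ₂ hcμ₁ hcL₂ hcμ₂ N x hDCA
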